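/- Let G and M be symmetric positive semidefinite n×n matrices with dual minimizers c_G, c_M, and let k, m ∈ ℝ^n satisfy |k_i| ≤ κ² and |m_i| ≤ κ² for all i, for some κ > 0. Then |s_{k,G} − s_{m,M}| ≤ (κ²/(4λ²n))·‖G − M‖_op + (1/(λ√n))·‖k − m‖₂. -/

import Mathlib

open Matrix Set

/-- Binary entropy potential, with Lean's convention `Real.log 0 = 0`. -/
noncomputable def phiEnt (c : ℝ) : ℝ := c * Real.log c + (1 - c) * Real.log (1 - c)

/-- The dual objective
`D_K(c) = (1/n)·∑ᵢ φ(cᵢ) + (1/(2λn²))·(y⊙c)ᵀ K (y⊙c)`. -/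
noncomputable def dualObj {n : ℕ} (lam : ℝ) (y : Fin n → ℝ)
    (K : Matrix (Fin n) (Fin n) ℝ) (c : Fin n → ℝ) : ℝ :=
  (1 / n) * ∑ i, phiEnt (c i) +
    (1 / (2 * lam * (n : ℝ) ^ 2)) * ((fun i => y i * c i) ⬝ᵥ (K *ᵥ fun i => y i * c i))

/-- The score `s_{k,G} = (1/(λn))·kᵀ(y⊙c)` of a test vector `k` at dual variable `c`. -/
noncomputable def score {n : ℕ} (lam : ℝ) (y k c : Fin n → ℝ) : ℝ :=
  (1 / (lam * n)) * (k ⬝ᵥ fun i => y i * c i)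

/-- Operator (spectral) norm of a real square matrix. -/
noncomputable def opNorm {n : ℕ} (A : Matrix (Fin n) (Fin n) ℝ) : ℝ :=
  ‖(Matrix.toEuclideanCLM (𝕜 := ℝ) A :
      EuclideanSpace ℝ (Fin n) →L[ℝ] EuclideanSpace ℝ (Fin n))‖

/-- Euclidean (ℓ²) norm of a vector. -/
noncomputable def e2norm {n : ℕ} (v : Fin n → ℝ) : ℝ := Real.sqrt (∑ i, (v i) ^ 2)

/-!
Since `φ'' = 1/c + 1/(1-c) ≥ 4` on `(0,1)`, the dual objective `D_K` is `(4/n)`-strongly convex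
on the cube in the Euclidean norm whenever `K` is positive semidefinite. Adding the quadratic
growth inequalities of `D_G` at `c_G` and of `D_M` at `c_M` gives
`(4/n)‖c_G - c_M‖² ≤ (D_G - D_M)(c_M) - (D_G - D_M)(c_G)`, and `D_G - D_M` is the quadratic form of
`(G - M)/(2λn²)` at `y ⊙ c`, whose variation between the two points is at most
`‖G - M‖·‖c_G - c_M‖·2√n / (2λn²)`. Hence `‖c_G - c_M‖ ≤ ‖G - M‖/(4λ√n)`. Finally
`λn (s_{k,G} - s_{m,M}) = kᵀ(y ⊙ (c_G - c_M)) + (k - m)ᵀ(y ⊙ c_M)`, and Cauchy–Schwarz with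
`‖k‖ ≤ κ²√n` and `‖y ⊙ c_M‖ ≤ √n` finishes the proof.
-/

lemma phiEnt_eq_neg_binEntropy : phiEnt = fun c => -Real.binEntropy c := by
  funext c
  simp only [phiEnt, Real.binEntropy, Real.log_inv]
  ring

lemma hasDerivAt_phiEnt {x : ℝ} (hx₀ : x ≠ 0) (hx₁ : x ≠ 1) :
    HasDerivAt phiEnt (Real.log x - Real.log (1 - x)) x := by
  rw [phiEnt_eq_neg_binEntropy]
  exact (Real.hasDerivAt_binEntropy hx₀ hx₁).neg.congr_deriv (by ring)

lemma convexOn_phiEnt_sub_two_mul_sq :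
    ConvexOn ℝ (Icc 0 1) fun c => phiEnt c - 2 * c ^ 2 := by
  refine convexOn_of_hasDerivWithinAt2_nonneg (convex_Icc 0 1)
    (f' := fun x => Real.log x - Real.log (1 - x) - 4 * x)
    (f'' := fun x => x⁻¹ + (1 - x)⁻¹ - 4) ?_ ?_ ?_ ?_
  · rw [phiEnt_eq_neg_binEntropy]
    fun_prop
  all_goals
    rw [interior_Icc]
    rintro x ⟨hx₀, hx₁⟩
  · have hsq : HasDerivAt (fun c : ℝ => 2 * c ^ 2) (4 * x) x :=
      ((hasDerivAt_pow 2 x).const_mul 2).congr_deriv (by ring)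
    exact ((hasDerivAt_phiEnt hx₀.ne' hx₁.ne).sub hsq).hasDerivWithinAt
  · have hlog : HasDerivAt (fun c => Real.log (1 - c)) (-1 / (1 - x)) x :=
      ((hasDerivAt_id x).const_sub 1).log (sub_ne_zero.2 hx₁.ne')
    have hlin : HasDerivAt (fun c : ℝ => 4 * c) 4 x :=
      ((hasDerivAt_id x).const_mul 4).congr_deriv (mul_one 4)
    exact (((Real.hasDerivAt_log hx₀.ne').sub hlog).sub hlin).hasDerivWithinAt.congr_deriv
      (by ring)
  · have : x⁻¹ + (1 - x)⁻¹ - 4 = (1 - 2 * x) ^ 2 / (x * (1 - x)) := by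
      field_simp
      ring
    rw [this]
    have : 0 < 1 - x := by linarith
    positivity

section Convexity

variable {E : Type*} [AddCommGroup E] [Module ℝ E]

lemma ConvexOn.sum_comp_apply {ι : Type*} [Fintype ι] {s : Set E} {g : E → ℝ}
    (hg : ConvexOn ℝ s g) : ConvexOn ℝ {x : ι → E | ∀ i, x i ∈ s} fun x => ∑ i, g (x i) := by
  refine ⟨fun x hx z hz a b ha hb hab i => hg.1 (hx i) (hz i) ha hb hab,
    fun x hx z hz a b ha hb hab => ?_⟩
  simp only [smul_eq_mul, Pi.add_apply, Pi.smul_apply, Finset.mul_sum, ← Finset.sum_add_distrib]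
  exact Finset.sum_le_sum fun i _ => hg.2 (hx i) (hz i) ha hb hab

lemma Matrix.PosSemidef.convexOn_dotProduct_mulVec {ι : Type*} [Fintype ι]
    {K : Matrix ι ι ℝ} (hK : K.PosSemidef) : ConvexOn ℝ univ fun x => x ⬝ᵥ K *ᵥ x := by
  refine ⟨convex_univ, fun x _ z _ a b ha hb hab => ?_⟩
  have hdiff : 0 ≤ (x - z) ⬝ᵥ K *ᵥ (x - z) := by simpa using hK.dotProduct_mulVec_nonneg (x - z)
  -- for `a + b = 1` the convexity gap of a quadratic form `q` is `a b q (x - z)`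
  obtain rfl : b = 1 - a := by linarith
  simp only [smul_eq_mul, mulVec_add, mulVec_smul, mulVec_sub, dotProduct_add, add_dotProduct,
    dotProduct_smul, smul_dotProduct, dotProduct_sub, sub_dotProduct] at hdiff ⊢
  nlinarith [mul_nonneg (mul_nonneg ha hb) hdiff]

end Convexity

section StrongConvexity

variable {E : Type*} [NormedAddCommGroup E] [NormedSpace ℝ E] {s : Set E} {f g : E → ℝ}

lemma UniformConvexOn.add_le_of_isMinOn {φ : ℝ → ℝ} (hf : UniformConvexOn s φ f) {x₀ x : E}
    (hx₀ : x₀ ∈ s) (hmin : IsMinOn f s x₀) (hx : x ∈ s) : f x₀ + φ ‖x - x₀‖ ≤ f x := by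
  have key : ∀ t ∈ Ioo (0 : ℝ) 1, f x₀ + (1 - t) * φ ‖x - x₀‖ ≤ f x := by
    rintro t ⟨ht₀, ht₁⟩
    have hcvx := hf.2 hx hx₀ ht₀.le (sub_nonneg.2 ht₁.le) (add_sub_cancel t 1)
    have hle : f x₀ ≤ f (t • x + (1 - t) • x₀) :=
      hmin (hf.1 hx hx₀ ht₀.le (sub_nonneg.2 ht₁.le) (add_sub_cancel t 1))
    simp only [smul_eq_mul] at hcvx
    refine le_of_mul_le_mul_left ?_ ht₀
    nlinarith
  have hlim : Filter.Tendsto (fun t : ℝ => f x₀ + (1 - t) * φ ‖x - x₀‖) (nhdsWithin 0 (Ioi 0))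
      (nhds (f x₀ + φ ‖x - x₀‖)) := by
    have hcont : Continuous fun t : ℝ => f x₀ + (1 - t) * φ ‖x - x₀‖ := by fun_prop
    exact tendsto_nhdsWithin_of_tendsto_nhds (by simpa using hcont.tendsto 0)
  exact le_of_tendsto hlim (Filter.eventually_of_mem (Ioo_mem_nhdsGT one_pos) key)

lemma StrongConvexOn.mul_sq_norm_sub_le_of_isMinOn {m : ℝ} (hf : StrongConvexOn s m f)
    (hg : StrongConvexOn s m g) {x x' : E} (hx : x ∈ s) (hx' : x' ∈ s) (hfx : IsMinOn f s x)
    (hgx' : IsMinOn g s x') : m * ‖x - x'‖ ^ 2 ≤ (f x' - g x') - (f x - g x) := by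
  have h₁ := hf.add_le_of_isMinOn hx hfx hx'
  have h₂ := hg.add_le_of_isMinOn hx' hgx' hx
  rw [norm_sub_rev] at h₁
  linarith

end StrongConvexity

section DualObjective

variable {n : ℕ} {lam : ℝ} {y : Fin n → ℝ}

lemma convexOn_dualObj_sub_sq {K : Matrix (Fin n) (Fin n) ℝ} (hlam : 0 ≤ lam)
    (hK : K.PosSemidef) :
    ConvexOn ℝ {c | ∀ i, c i ∈ Icc (0 : ℝ) 1} fun c =>
      dualObj lam y K c - 2 / n * ∑ i, c i ^ 2 := by
  have hent := (convexOn_phiEnt_sub_two_mul_sq.sum_comp_apply (ι := Fin n)).smul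
    (c := 1 / (n : ℝ)) (by positivity)
  have hquad := ((hK.convexOn_dotProduct_mulVec.comp_linearMap (LinearMap.mulLeft ℝ y)).subset
    (subset_univ _) hent.1).smul (c := 1 / (2 * lam * (n : ℝ) ^ 2)) (by positivity)
  refine (hent.add hquad).congr fun c _ => ?_
  simp only [dualObj, Finset.sum_sub_distrib, ← Finset.mul_sum, Function.comp_apply,
    LinearMap.mulLeft_apply, Pi.mul_def, Pi.add_apply, smul_eq_mul]
  ring

lemma strongConvexOn_dualObj {K : Matrix (Fin n) (Fin n) ℝ} (hlam : 0 ≤ lam)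
    (hK : K.PosSemidef) :
    StrongConvexOn (WithLp.ofLp ⁻¹' {c | ∀ i, c i ∈ Icc (0 : ℝ) 1}) (4 / n)
      fun x : EuclideanSpace ℝ (Fin n) => dualObj lam y K x.ofLp := by
  rw [strongConvexOn_iff_convex]
  refine ((convexOn_dualObj_sub_sq (y := y) hlam hK).comp_linearMap
    (WithLp.linearEquiv 2 ℝ (Fin n → ℝ)).toLinearMap).congr fun x _ => ?_
  simp only [Function.comp_apply, LinearEquiv.coe_coe, WithLp.coe_linearEquiv,
    EuclideanSpace.real_norm_sq_eq]
  ring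

lemma dualObj_sub_dualObj (G M : Matrix (Fin n) (Fin n) ℝ) (c : Fin n → ℝ) :
    dualObj lam y G c - dualObj lam y M c = 1 / (2 * lam * (n : ℝ) ^ 2) *
      ((fun i => y i * c i) ⬝ᵥ (G - M) *ᵥ fun i => y i * c i) := by
  simp only [dualObj, sub_mulVec, dotProduct_sub]
  ring

end DualObjective

section EuclideanNorm

variable {n : ℕ}

lemma e2norm_eq_norm_toLp (v : Fin n → ℝ) : e2norm v = ‖WithLp.toLp 2 v‖ := by
  simp [e2norm, EuclideanSpace.norm_eq]

lemma e2norm_nonneg (v : Fin n → ℝ) : 0 ≤ e2norm v := Real.sqrt_nonneg _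

lemma opNorm_nonneg (A : Matrix (Fin n) (Fin n) ℝ) : 0 ≤ opNorm A := norm_nonneg _

lemma e2norm_sub_comm (v w : Fin n → ℝ) : e2norm (v - w) = e2norm (w - v) := by
  simp only [e2norm_eq_norm_toLp, WithLp.toLp_sub, norm_sub_rev]

lemma e2norm_le_sqrt_mul {v : Fin n → ℝ} {B : ℝ} (hB : 0 ≤ B) (hv : ∀ i, |v i| ≤ B) :
    e2norm v ≤ √n * B := by
  calc e2norm v ≤ √(∑ _i : Fin n, B ^ 2) :=
        Real.sqrt_le_sqrt (Finset.sum_le_sum fun i _ => sq_le_sq.2 ((hv i).trans (le_abs_self B)))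
    _ = √n * B := by simp [Real.sqrt_mul, Real.sqrt_sq hB]

lemma e2norm_mul_sub_mul_le {y : Fin n → ℝ} (hy : ∀ i, |y i| ≤ 1) (c c' : Fin n → ℝ) :
    e2norm ((fun i => y i * c i) - fun i => y i * c' i) ≤ e2norm (c - c') := by
  refine Real.sqrt_le_sqrt (Finset.sum_le_sum fun i _ => ?_)
  rw [Pi.sub_apply, Pi.sub_apply, ← mul_sub, mul_pow]
  exact mul_le_of_le_one_left (sq_nonneg _) ((sq_le_one_iff_abs_le_one _).2 (hy i))

lemma e2norm_mul_le_sqrt {y c : Fin n → ℝ} (hy : ∀ i, |y i| ≤ 1) (hc : ∀ i, c i ∈ Icc (0 : ℝ) 1) :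
    e2norm (fun i => y i * c i) ≤ √n := by
  simpa using e2norm_le_sqrt_mul zero_le_one fun i => by
    rw [abs_mul]
    exact mul_le_one₀ (hy i) (abs_nonneg _) (abs_le.2 ⟨by linarith [(hc i).1], (hc i).2⟩)

lemma abs_dotProduct_le (v w : Fin n → ℝ) : |v ⬝ᵥ w| ≤ e2norm v * e2norm w := by
  rw [e2norm_eq_norm_toLp, e2norm_eq_norm_toLp, dotProduct_comm]
  simpa [EuclideanSpace.inner_toLp_toLp] using
    abs_real_inner_le_norm (WithLp.toLp 2 v) (WithLp.toLp 2 w)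

lemma e2norm_mulVec_le (A : Matrix (Fin n) (Fin n) ℝ) (w : Fin n → ℝ) :
    e2norm (A *ᵥ w) ≤ opNorm A * e2norm w := by
  simpa only [e2norm_eq_norm_toLp, opNorm, toEuclideanCLM_toLp] using
    (toEuclideanCLM (𝕜 := ℝ) A).le_opNorm (WithLp.toLp 2 w)

lemma abs_dotProduct_mulVec_le (A : Matrix (Fin n) (Fin n) ℝ) (v w : Fin n → ℝ) :
    |v ⬝ᵥ A *ᵥ w| ≤ opNorm A * e2norm v * e2norm w :=
  calc |v ⬝ᵥ A *ᵥ w| ≤ e2norm v * (opNorm A * e2norm w) :=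
        (abs_dotProduct_le v _).trans
          (mul_le_mul_of_nonneg_left (e2norm_mulVec_le A w) (e2norm_nonneg v))
    _ = opNorm A * e2norm v * e2norm w := by ring

lemma dotProduct_mulVec_self_sub_le (A : Matrix (Fin n) (Fin n) ℝ) (u v : Fin n → ℝ) :
    u ⬝ᵥ A *ᵥ u - v ⬝ᵥ A *ᵥ v ≤ opNorm A * e2norm (u - v) * (e2norm u + e2norm v) := by
  have hsplit : u ⬝ᵥ A *ᵥ u - v ⬝ᵥ A *ᵥ v = (u - v) ⬝ᵥ A *ᵥ u + v ⬝ᵥ A *ᵥ (u - v) := by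
    simp only [sub_dotProduct, mulVec_sub, dotProduct_sub]
    ring
  rw [hsplit]
  calc _ ≤ opNorm A * e2norm (u - v) * e2norm u + opNorm A * e2norm v * e2norm (u - v) :=
        add_le_add ((le_abs_self _).trans (abs_dotProduct_mulVec_le A _ _))
          ((le_abs_self _).trans (abs_dotProduct_mulVec_le A _ _))
    _ = _ := by ring

end EuclideanNorm

section Stability

variable {n : ℕ} {lam : ℝ} {y : Fin n → ℝ} {G M : Matrix (Fin n) (Fin n) ℝ} {cG cM : Fin n → ℝ}

lemma dualObj_sub_dualObj_sub_le (hlam : 0 ≤ lam) (hy : ∀ i, |y i| ≤ 1)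
    (hcG : ∀ i, cG i ∈ Icc (0 : ℝ) 1) (hcM : ∀ i, cM i ∈ Icc (0 : ℝ) 1) :
    (dualObj lam y G cM - dualObj lam y M cM) - (dualObj lam y G cG - dualObj lam y M cG) ≤
      opNorm (G - M) * e2norm (cG - cM) * √n / (lam * (n : ℝ) ^ 2) := by
  rw [dualObj_sub_dualObj, dualObj_sub_dualObj, ← mul_sub]
  have hA := opNorm_nonneg (G - M)
  have hδ := e2norm_nonneg (cG - cM)
  have hdiff := (e2norm_mul_sub_mul_le hy cM cG).trans_eq (e2norm_sub_comm cM cG)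
  have huG := e2norm_mul_le_sqrt hy hcG
  have huM := e2norm_mul_le_sqrt hy hcM
  calc _ ≤ 1 / (2 * lam * (n : ℝ) ^ 2) * (opNorm (G - M) *
          e2norm ((fun i => y i * cM i) - fun i => y i * cG i) *
          (e2norm (fun i => y i * cM i) + e2norm (fun i => y i * cG i))) := by
        gcongr
        exact dotProduct_mulVec_self_sub_le _ _ _
    _ ≤ 1 / (2 * lam * (n : ℝ) ^ 2) * (opNorm (G - M) * e2norm (cG - cM) * (√n + √n)) := by
        have := add_nonneg (e2norm_nonneg (fun i => y i * cM i)) (e2norm_nonneg fun i => y i * cG i)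
        gcongr
    _ = _ := by ring

theorem e2norm_sub_le_of_isMinOn_dualObj (hn : 0 < n) (hlam : 0 < lam) (hy : ∀ i, |y i| ≤ 1)
    (hG : G.PosSemidef) (hM : M.PosSemidef) (hcG : ∀ i, cG i ∈ Icc (0 : ℝ) 1)
    (hminG : IsMinOn (dualObj lam y G) {c | ∀ i, c i ∈ Icc (0 : ℝ) 1} cG)
    (hcM : ∀ i, cM i ∈ Icc (0 : ℝ) 1)
    (hminM : IsMinOn (dualObj lam y M) {c | ∀ i, c i ∈ Icc (0 : ℝ) 1} cM) :
    e2norm (cG - cM) ≤ opNorm (G - M) / (4 * lam * √n) := by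
  have hn' : (0 : ℝ) < n := Nat.cast_pos.2 hn
  have hstrong := (strongConvexOn_dualObj (y := y) hlam.le hG).mul_sq_norm_sub_le_of_isMinOn
    (strongConvexOn_dualObj hlam.le hM) (x := WithLp.toLp 2 cG) (x' := WithLp.toLp 2 cM)
    hcG hcM (fun c hc => hminG hc) (fun c hc => hminM hc)
  rw [← WithLp.toLp_sub, ← e2norm_eq_norm_toLp] at hstrong
  set δ := e2norm (cG - cM)
  have hsq : δ ^ 2 ≤ opNorm (G - M) / (4 * lam * √n) * δ :=
    calc δ ^ 2 = n / 4 * (4 / n * δ ^ 2) := by field_simp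
      _ ≤ n / 4 * (opNorm (G - M) * δ * √n / (lam * (n : ℝ) ^ 2)) :=
          mul_le_mul_of_nonneg_left
            (hstrong.trans (dualObj_sub_dualObj_sub_le hlam.le hy hcG hcM)) (by positivity)
      _ = opNorm (G - M) / (4 * lam * √n) * δ := by
          field_simp
          rw [Real.sq_sqrt hn'.le]
          ring
  have hR : 0 ≤ opNorm (G - M) / (4 * lam * √n) := div_nonneg (opNorm_nonneg _) (by positivity)
  nlinarith [e2norm_nonneg (cG - cM)]

end Stability

theorem abs_score_sub_score_le {n : ℕ} (hn : 0 < n) {lam : ℝ} (hlam : 0 < lam) {y : Fin n → ℝ}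
    (hy : ∀ i, |y i| ≤ 1) {B : ℝ} (hB : 0 ≤ B) {k : Fin n → ℝ} (hk : ∀ i, |k i| ≤ B)
    (m : Fin n → ℝ) {c c' : Fin n → ℝ} (hc' : ∀ i, c' i ∈ Icc (0 : ℝ) 1) :
    |score lam y k c - score lam y m c'| ≤
      (B * e2norm (c - c') + e2norm (k - m)) / (lam * √n) := by
  set u : Fin n → ℝ := fun i => y i * c i
  set u' : Fin n → ℝ := fun i => y i * c' i
  have hn' : (0 : ℝ) < n := Nat.cast_pos.2 hn
  have hsplit : score lam y k c - score lam y m c' =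
      (k ⬝ᵥ (u - u') + (k - m) ⬝ᵥ u') / (lam * n) := by
    simp only [score, dotProduct_sub, sub_dotProduct]
    ring
  have hfirst : |k ⬝ᵥ (u - u')| ≤ √n * B * e2norm (c - c') :=
    (abs_dotProduct_le _ _).trans (mul_le_mul (e2norm_le_sqrt_mul hB hk)
      (e2norm_mul_sub_mul_le hy c c') (e2norm_nonneg _) (by positivity))
  have hsecond : |(k - m) ⬝ᵥ u'| ≤ e2norm (k - m) * √n :=
    (abs_dotProduct_le _ _).trans
      (mul_le_mul_of_nonneg_left (e2norm_mul_le_sqrt hy hc') (e2norm_nonneg _))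
  rw [hsplit, abs_div, abs_of_pos (by positivity : 0 < lam * n)]
  calc _ ≤ (√n * B * e2norm (c - c') + e2norm (k - m) * √n) / (lam * n) :=
        div_le_div_of_nonneg_right ((abs_add_le _ _).trans (add_le_add hfirst hsecond))
          (by positivity)
    _ = _ := by
        field_simp
        rw [Real.sq_sqrt hn'.le]
        ring

theorem score_perturbation_general
    {n : ℕ} (hn : 0 < n)
    (y : Fin n → ℝ) (hy : ∀ i, y i = 1 ∨ y i = -1)
    (lam : ℝ) (hlam : 0 < lam)
    (G M : Matrix (Fin n) (Fin n) ℝ) (hG : G.PosSemidef) (hM : M.PosSemidef)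
    (cG cM : Fin n → ℝ)
    (hcG : (∀ i, cG i ∈ Icc (0:ℝ) 1) ∧
      IsMinOn (dualObj lam y G) {c | ∀ i, c i ∈ Icc (0:ℝ) 1} cG)
    (hcM : (∀ i, cM i ∈ Icc (0:ℝ) 1) ∧
      IsMinOn (dualObj lam y M) {c | ∀ i, c i ∈ Icc (0:ℝ) 1} cM)
    (k m : Fin n → ℝ) (κ : ℝ)
    (hk : ∀ i, |k i| ≤ κ ^ 2) :
    |score lam y k cG - score lam y m cM| ≤
      (κ ^ 2 / (4 * lam ^ 2 * n)) * opNorm (G - M) +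
        (1 / (lam * Real.sqrt n)) * e2norm (k - m) := by
  have hy' : ∀ i, |y i| ≤ 1 := fun i => by rcases hy i with h | h <;> simp [h]
  have hn' : (0 : ℝ) < n := Nat.cast_pos.2 hn
  calc _ ≤ (κ ^ 2 * e2norm (cG - cM) + e2norm (k - m)) / (lam * √n) :=
        abs_score_sub_score_le hn hlam hy' (sq_nonneg κ) hk m hcM.1
    _ ≤ (κ ^ 2 * (opNorm (G - M) / (4 * lam * √n)) + e2norm (k - m)) / (lam * √n) := by
        gcongr
        exact e2norm_sub_le_of_isMinOn_dualObj hn hlam hy' hG hM hcG.1 hcG.2 hcM.1 hcM.2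
    _ = _ := by
        field_simp
        linear_combination -(κ ^ 2 * opNorm (G - M)) * Real.sq_sqrt hn'.le

/-- Deterministic score perturbation bound:
`|s_{k,G} − s_{m,M}| ≤ (κ²/(4λ²n))·‖G − M‖_op + (1/(λ√n))·‖k − m‖₂`. -/
theorem score_perturbation
    {n : ℕ} (hn : 0 < n)
    (y : Fin n → ℝ) (hy : ∀ i, y i = 1 ∨ y i = -1)
    (lam : ℝ) (hlam : 0 < lam)
    (G M : Matrix (Fin n) (Fin n) ℝ) (hG : G.PosSemidef) (hM : M.PosSemidef)
    (cG cM : Fin n → ℝ)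
    (hcG : (∀ i, cG i ∈ Icc (0:ℝ) 1) ∧
      IsMinOn (dualObj lam y G) {c | ∀ i, c i ∈ Icc (0:ℝ) 1} cG)
    (hcM : (∀ i, cM i ∈ Icc (0:ℝ) 1) ∧
      IsMinOn (dualObj lam y M) {c | ∀ i, c i ∈ Icc (0:ℝ) 1} cM)
    (k m : Fin n → ℝ) (κ : ℝ) (hκ : 0 < κ)
    (hk : ∀ i, |k i| ≤ κ ^ 2) (hm : ∀ i, |m i| ≤ κ ^ 2) :
    |score lam y k cG - score lam y m cM| ≤
      (κ ^ 2 / (4 * lam ^ 2 * n)) * opNorm (G - M) +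
        (1 / (lam * Real.sqrt n)) * e2norm (k - m) :=
  score_perturbation_general hn y hy lam hlam G M hG hM cG cM hcG hcM k m κ hk
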